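/- arXiv:1408.5935 — 3 statements merged into one kernel-verified Lean document; each statement's English description precedes it below -/
import Mathlib

section
/- Fix a nonempty closed set V ⊆ [0,L]. Then inf { ‖u'‖_{L^∞} / ‖u‖_{L^∞} : u Lipschitz on [0,L], u = 0 on V, u ≢ 0 } equals 1 / max_{z ∈ [0,L]} dist(z, V), with the infimum attained by the distance cone u(x) = max(0, 1 - dist(x, z₀)/dist(z₀, V)) where z₀ maximizes dist(·, V). -/
/-!
Let `d = max dist(·, V)` on `[0, L]`. A Lipschitz function is absolutely continuous, so by the
fundamental theorem of calculus `|u x - u v| ≤ ‖u'‖_∞ |x - v|` on `[0, L]`. If `u` vanishes on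
`V`, comparing `x` with a nearest point `v ∈ V` gives `‖u‖_∞ ≤ ‖u'‖_∞ d`, so every quotient is
at least `1 / d`. The cone of radius `d` centred at `z₀` vanishes on `V` (every point of `V` is at
distance at least `d` from `z₀`), takes the value `1` at `z₀` and is `1 / d`-Lipschitz, so its
quotient is at most `1 / d`.
-/

open MeasureTheory Filter Real Set

namespace LipschitzWith

variable {f : ℝ → ℝ} {K : NNReal}

theorem abs_deriv_le (hf : LipschitzWith K f) (x : ℝ) : |deriv f x| ≤ K := by
  simpa using norm_deriv_le_of_lipschitz (𝕜 := ℝ) hf (x₀ := x)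

theorem essSup_abs_deriv_le (hf : LipschitzWith K f) (μ : Measure ℝ) [NeZero μ] :
    essSup (fun x => |deriv f x|) μ ≤ K :=
  have : (ae μ).NeBot := ae_neBot.2 (NeZero.ne μ)
  essSup_le_of_ae_le _ (Eventually.of_forall hf.abs_deriv_le)
    (isCoboundedUnder_le_of_le _ fun _ => abs_nonneg _)

theorem abs_sub_le_of_ae_abs_deriv_le (hf : LipschitzWith K f) {a b M : ℝ}
    (h : ∀ᵐ t, t ∈ uIoc a b → |deriv f t| ≤ M) : |f b - f a| ≤ M * |b - a| := by
  rw [← hf.lipschitzOnWith.absolutelyContinuousOnInterval.integral_deriv_eq_sub]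
  simpa using
    intervalIntegral.norm_integral_le_of_norm_le_const_ae (f := deriv f) (by simpa using h)

theorem abs_sub_le_essSup_abs_deriv_mul (hf : LipschitzWith K f) {s : Set ℝ}
    (hs : MeasurableSet s) [s.OrdConnected] {x y : ℝ} (hx : x ∈ s) (hy : y ∈ s) :
    |f y - f x| ≤ essSup (fun t => |deriv f t|) (volume.restrict s) * |y - x| := by
  have hbound : ∀ᵐ t ∂volume.restrict s,
      |deriv f t| ≤ essSup (fun t => |deriv f t|) (volume.restrict s) :=
    ae_le_essSup (isBoundedUnder_of ⟨K, hf.abs_deriv_le⟩)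
  refine hf.abs_sub_le_of_ae_abs_deriv_le (((ae_restrict_iff' hs).1 hbound).mono ?_)
  exact fun t ht hmem => ht (Set.OrdConnected.uIcc_subset ‹_› hx hy (uIoc_subset_uIcc hmem))

end LipschitzWith

noncomputable def linftyRayleighQuotient (s : Set ℝ) (u : ℝ → ℝ) : ℝ :=
  essSup (fun x => |deriv u x|) (volume.restrict s) / ⨆ x ∈ s, |u x|

section LowerBound

variable {u : ℝ → ℝ} {K : NNReal} {s V : Set ℝ}

theorem abs_le_essSup_abs_deriv_mul_infDist (hu : LipschitzWith K u) (hs : MeasurableSet s)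
    [s.OrdConnected] (hV : V.Nonempty) (hVc : IsClosed V) (hVs : V ⊆ s)
    (huV : ∀ x ∈ V, u x = 0) {x : ℝ} (hx : x ∈ s) :
    |u x| ≤ essSup (fun t => |deriv u t|) (volume.restrict s) * Metric.infDist x V := by
  obtain ⟨v, hvV, hxv⟩ := hVc.exists_infDist_eq_dist hV x
  calc |u x| = |u x - u v| := by rw [huV v hvV, sub_zero]
    _ ≤ _ * |x - v| := hu.abs_sub_le_essSup_abs_deriv_mul hs (hVs hvV) hx
    _ = _ := by rw [hxv, Real.dist_eq]

theorem one_div_le_linftyRayleighQuotient (hu : LipschitzWith K u) (hs : MeasurableSet s)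
    [s.OrdConnected] (hV : V.Nonempty) (hVc : IsClosed V) (hVs : V ⊆ s)
    (huV : ∀ x ∈ V, u x = 0) (hne : ∃ x ∈ s, u x ≠ 0) {d : ℝ} (hd : 0 < d)
    (hdist : ∀ z ∈ s, Metric.infDist z V ≤ d) :
    1 / d ≤ linftyRayleighQuotient s u := by
  set M := essSup (fun t => |deriv u t|) (volume.restrict s)
  have hbound : ∀ x ∈ s, |u x| ≤ M * Metric.infDist x V :=
    fun x hx => abs_le_essSup_abs_deriv_mul_infDist hu hs hV hVc hVs huV hx
  obtain ⟨x₁, hx₁, hux₁⟩ := hne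
  have hM : 0 < M := by
    by_contra! hM
    have := mul_nonpos_of_nonpos_of_nonneg hM (Metric.infDist_nonneg (x := x₁) (s := V))
    exact absurd (hbound x₁ hx₁) (by linarith [abs_pos.2 hux₁])
  have hMd : ∀ x ∈ s, |u x| ≤ M * d :=
    fun x hx => (hbound x hx).trans (mul_le_mul_of_nonneg_left (hdist x hx) hM.le)
  have hsup_le : ⨆ x ∈ s, |u x| ≤ M * d :=
    Real.iSup_le (fun x => Real.iSup_le (hMd x) (by positivity)) (by positivity)
  have hsup_pos : 0 < ⨆ x ∈ s, |u x| := by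
    have hbdd : BddAbove (⋃ x, range fun (_ : x ∈ s) => |u x|) :=
      ⟨M * d, by rintro _ ⟨_, ⟨x, rfl⟩, hx, rfl⟩; exact hMd x hx⟩
    exact (abs_pos.2 hux₁).trans_le (le_ciSup₂ hbdd x₁ hx₁)
  rw [linftyRayleighQuotient, div_le_div_iff₀ hd hsup_pos, one_mul]
  exact hsup_le

end LowerBound

noncomputable def distCone (z₀ d y : ℝ) : ℝ := max 0 (1 - |y - z₀| / d)

section DistCone

variable (z₀ : ℝ) {d : ℝ}

theorem lipschitzWith_distCone (hd : 0 < d) :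
    LipschitzWith (Real.toNNReal (1 / d)) (distCone z₀ d) := by
  refine LipschitzWith.const_max (LipschitzWith.of_dist_le_mul fun x y => ?_) 0
  rw [Real.coe_toNNReal _ (by positivity), Real.dist_eq, Real.dist_eq,
    show 1 - |x - z₀| / d - (1 - |y - z₀| / d) = (|y - z₀| - |x - z₀|) / d by ring,
    abs_div, abs_of_pos hd, div_eq_inv_mul, one_div]
  refine mul_le_mul_of_nonneg_left ?_ (by positivity)
  simpa [abs_sub_comm] using abs_abs_sub_abs_le_abs_sub (y - z₀) (x - z₀)

@[simp]
theorem distCone_self : distCone z₀ d z₀ = 1 := by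
  simp [distCone]

theorem abs_distCone_le_one (hd : 0 ≤ d) (y : ℝ) : |distCone z₀ d y| ≤ 1 := by
  rw [distCone, abs_of_nonneg (le_max_left _ _)]
  exact max_le zero_le_one (sub_le_self _ (by positivity))

theorem distCone_eq_zero {y : ℝ} (hd : 0 < d) (hy : d ≤ |y - z₀|) : distCone z₀ d y = 0 :=
  max_eq_left (sub_nonpos.2 ((one_le_div hd).2 hy))

theorem biSup_abs_distCone {s : Set ℝ} (hd : 0 ≤ d) (hz₀ : z₀ ∈ s) :
    ⨆ y ∈ s, |distCone z₀ d y| = 1 := by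
  refine le_antisymm (Real.iSup_le (fun y => Real.iSup_le (fun _ => abs_distCone_le_one z₀ hd y)
    zero_le_one) zero_le_one) ?_
  have hbdd : BddAbove (⋃ y, range fun (_ : y ∈ s) => |distCone z₀ d y|) := by
    refine ⟨1, ?_⟩
    rintro _ ⟨_, ⟨y, rfl⟩, _, rfl⟩
    exact abs_distCone_le_one z₀ hd y
  simpa using le_ciSup₂ hbdd z₀ hz₀

theorem linftyRayleighQuotient_distCone_le (hd : 0 < d) {s : Set ℝ} (hs : volume s ≠ 0)
    (hz₀ : z₀ ∈ s) : linftyRayleighQuotient s (distCone z₀ d) ≤ 1 / d := by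
  have : NeZero (volume.restrict s) := ⟨by simpa using hs⟩
  rw [linftyRayleighQuotient, biSup_abs_distCone z₀ hd.le hz₀, div_one]
  simpa [hd.le] using (lipschitzWith_distCone z₀ hd).essSup_abs_deriv_le _

end DistCone

theorem stmt4 (L : ℝ) (hL : 0 < L) (V : Set ℝ) (hV : V.Nonempty) (hVc : IsClosed V)
    (hVsub : V ⊆ Set.Icc 0 L) (z₀ : ℝ) (hz₀ : z₀ ∈ Set.Icc 0 L)
    (hmax : ∀ z ∈ Set.Icc 0 L, Metric.infDist z V ≤ Metric.infDist z₀ V)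
    (hpos : 0 < Metric.infDist z₀ V) :
    sInf {r : ℝ | ∃ (u : ℝ → ℝ) (K : NNReal), LipschitzWith K u ∧
        (∀ x ∈ V, u x = 0) ∧ (∃ x ∈ Set.Icc 0 L, u x ≠ 0) ∧
        r = essSup (fun x => |deriv u x|) (volume.restrict (Set.Icc 0 L)) /
            (⨆ x ∈ Set.Icc 0 L, |u x|)} = 1 / Metric.infDist z₀ V ∧
    essSup (fun x => |deriv (fun y : ℝ => max 0 (1 - |y - z₀| / Metric.infDist z₀ V)) x|)
        (volume.restrict (Set.Icc 0 L)) /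
      (⨆ x ∈ Set.Icc 0 L, |max 0 (1 - |x - z₀| / Metric.infDist z₀ V)|) =
      1 / Metric.infDist z₀ V := by
  set d := Metric.infDist z₀ V
  have hlower : ∀ (u : ℝ → ℝ) (K : NNReal), LipschitzWith K u → (∀ x ∈ V, u x = 0) →
      (∃ x ∈ Icc 0 L, u x ≠ 0) → 1 / d ≤ linftyRayleighQuotient (Icc 0 L) u :=
    fun u K hu huV hne =>
      one_div_le_linftyRayleighQuotient hu measurableSet_Icc hV hVc hVsub huV hne hpos hmax
  have hcone_V : ∀ x ∈ V, distCone z₀ d x = 0 := fun x hx =>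
    distCone_eq_zero z₀ hpos (by
      simpa [Real.dist_eq, abs_sub_comm] using Metric.infDist_le_dist_of_mem (x := z₀) hx)
  have hcone_ne : ∃ x ∈ Icc 0 L, distCone z₀ d x ≠ 0 := ⟨z₀, hz₀, by simp⟩
  have hcone : linftyRayleighQuotient (Icc 0 L) (distCone z₀ d) = 1 / d :=
    le_antisymm (linftyRayleighQuotient_distCone_le z₀ hpos (by simp [hL]) hz₀)
      (hlower _ _ (lipschitzWith_distCone z₀ hpos) hcone_V hcone_ne)
  refine ⟨IsLeast.csInf_eq ⟨⟨_, _, lipschitzWith_distCone z₀ hpos, hcone_V, hcone_ne,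
    hcone.symm⟩, ?_⟩, hcone⟩
  rintro r ⟨u, K, hu, huV, hne, rfl⟩
  exact hlower u K hu huV hne
end

section
/- Consider the 3-edge star graph consisting of one edge of length a and two edges of length b joined at a common interior vertex, with Dirichlet conditions at the three terminal vertices. The Cheeger constant inf { Per(D)/|D| } over admissible subsets D equals 3/(a+2b) if a ≤ 4b and 2/a if a > 4b. -/
open MeasureTheory Filter Real Set
open scoped Classical

/-! Let `C` be the claimed value, so that `C * a ≤ 2`, `C * b ≤ 2` and `C * (a + 2b) ≤ 3`.
An interval of `D` not touching the centre has two boundary points and length at most that of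
its edge, so it has perimeter at least `C` times its length. The intervals touching the centre
form one connected piece whose boundary consists of their outer endpoints and, unless all three
edges are involved, the centre itself. So its perimeter is `3 ≥ C (a + 2b)` for the whole star,
and `k + 1` when `k ∈ {1, 2}` edges are involved, which is at least `C` times their total
length. Summing gives `Per(D) ≥ C |D|`, with equality for `D = Γ` when `a ≤ 4b` and for the long edge when `a > 4b`. -/

noncomputable section

namespace StarGraph

def edgePerimeter (c d : ℝ) : ℝ := if c < d then 1 + if 0 < c then 1 else 0 else 0

/- Edge `i` carries the interval `[c i, d i]`, with `0` at the central vertex; an interval with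
`c i = 0` is attached to the centre, which is a boundary point iff some but not all intervals are
attached. -/
def perimeter (c d : Fin 3 → ℝ) : ℝ :=
  (∑ i : Fin 3, edgePerimeter (c i) (d i)) +
    if (∃ i, c i < d i ∧ c i = 0) ∧ (∃ i, ¬(c i < d i ∧ c i = 0)) then 1 else 0

def totalLength (c d : Fin 3 → ℝ) : ℝ := ∑ i : Fin 3, (d i - c i)

/- An interval attached to the centre is charged `C * ℓ` instead of its length, and its unit of
boundary at the centre is set aside; `sum_attached_le` shows the attached intervals together
with the central vertex pay for these charges. -/
lemma mul_sub_add_le_edgePerimeter {C ℓ c d : ℝ} (hc : 0 ≤ c) (hcd : c ≤ d) (hdℓ : d ≤ ℓ)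
    (hC : 0 ≤ C) (hCℓ : C * ℓ ≤ 2) :
    C * (d - c) + (if c < d ∧ c = 0 then 1 else 0) ≤
      edgePerimeter c d + if c < d ∧ c = 0 then C * ℓ else 0 := by
  unfold edgePerimeter
  by_cases hlt : c < d
  · rcases hc.eq_or_lt with rfl | hpos
    · simp [hlt]
      nlinarith
    · simp [hlt, hpos, hpos.ne']
      nlinarith
  · simp [le_antisymm hcd (not_lt.1 hlt)]

lemma sum_attached_le (s : Fin 3 → Prop) [DecidablePred s] {x : Fin 3 → ℝ} (hx : ∀ i, 0 ≤ x i)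
    (hx2 : ∀ i, x i ≤ 2) (hx3 : ∑ i, x i ≤ 3) :
    ∑ i, (if s i then x i else 0) ≤
      (∑ i, if s i then (1 : ℝ) else 0) + if (∃ i, s i) ∧ (∃ i, ¬s i) then 1 else 0 := by
  simp only [Fin.sum_univ_three, Fin.exists_fin_succ] at hx3 ⊢
  by_cases h0 : s 0 <;> by_cases h1 : s 1 <;> by_cases h2 : s 2 <;>
    simp [h0, h1, h2] <;> linarith [hx 0, hx 1, hx 2, hx2 0, hx2 1, hx2 2]

theorem mul_totalLength_le_perimeter {C : ℝ} {ℓ c d : Fin 3 → ℝ} (hc : ∀ i, 0 ≤ c i)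
    (hcd : ∀ i, c i ≤ d i) (hdℓ : ∀ i, d i ≤ ℓ i) (hC : 0 ≤ C) (hCℓ : ∀ i, C * ℓ i ≤ 2)
    (hCsum : C * ∑ i, ℓ i ≤ 3) :
    C * totalLength c d ≤ perimeter c d := by
  have hedges := Finset.sum_le_sum fun i (_ : i ∈ Finset.univ) =>
    mul_sub_add_le_edgePerimeter (hc i) (hcd i) (hdℓ i) hC (hCℓ i)
  have hcenter := sum_attached_le (fun i => c i < d i ∧ c i = 0)
    (fun i => mul_nonneg hC ((hc i).trans ((hcd i).trans (hdℓ i)))) hCℓ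
    (by rwa [← Finset.mul_sum])
  simp only [Finset.sum_add_distrib, ← Finset.mul_sum] at hedges
  unfold perimeter totalLength
  linarith

lemma perimeter_zero_of_pos {ℓ : Fin 3 → ℝ} (hℓ : ∀ i, 0 < ℓ i) : perimeter 0 ℓ = 3 := by
  simp [perimeter, edgePerimeter, hℓ]

lemma perimeter_single_edge {a : ℝ} (ha : 0 < a) : perimeter 0 ![a, 0, 0] = 2 := by
  simp only [perimeter, edgePerimeter, Fin.sum_univ_three]
  simp [Fin.exists_fin_succ, ha]
  norm_num

lemma totalLength_zero (ℓ : Fin 3 → ℝ) : totalLength 0 ℓ = ∑ i, ℓ i := by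
  simp [totalLength]

lemma totalLength_pos {c d : Fin 3 → ℝ} (hcd : ∀ i, c i ≤ d i) (hne : ∃ i, c i < d i) :
    0 < totalLength c d := by
  obtain ⟨j, hj⟩ := hne
  exact Finset.sum_pos' (fun i _ => sub_nonneg.2 (hcd i)) ⟨j, Finset.mem_univ j, sub_pos.2 hj⟩

end StarGraph

end

open StarGraph

lemma cheeger_bounds {a b : ℝ} (ha : 0 < a) (hb : 0 < b) :
    let C := if a ≤ 4 * b then 3 / (a + 2 * b) else 2 / a
    0 ≤ C ∧ C * a ≤ 2 ∧ C * b ≤ 2 ∧ C * (a + 2 * b) ≤ 3 := by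
  intro C
  simp only [C]
  have hab : 0 < a + 2 * b := by linarith
  split_ifs with h
  · refine ⟨by positivity, ?_, ?_, ?_⟩ <;> rw [div_mul_eq_mul_div, div_le_iff₀ hab] <;> linarith
  · refine ⟨by positivity, ?_, ?_, ?_⟩ <;> rw [div_mul_eq_mul_div, div_le_iff₀ ha] <;> linarith

/-- Cheeger constant of the 3-star graph with one edge of length `a` and two edges of
length `b`, with Dirichlet conditions at the three terminal vertices. Each edge is
parametrized by `[0, length]` with `0` at the central vertex; an admissible set is a
union of one subinterval `[cᵢ, dᵢ]` per edge. Its measure is `Σ (dᵢ - cᵢ)`; its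
perimeter counts, per nonempty edge-interval, the outer endpoint `dᵢ` (always a
boundary point, the Dirichlet vertex included) plus the inner endpoint when
`cᵢ > 0`, and the central vertex counts as one boundary point exactly when some but
not all edges attach to it. The infimum of perimeter/measure is `3/(a+2b)` when
`a ≤ 4b` and `2/a` when `a > 4b`. -/
theorem stmt15 (a b : ℝ) (ha : 0 < a) (hb : 0 < b) :
    sInf {r : ℝ | ∃ c d : Fin 3 → ℝ,
        (∀ i, 0 ≤ c i) ∧ (∀ i, c i ≤ d i) ∧
        d 0 ≤ a ∧ d 1 ≤ b ∧ d 2 ≤ b ∧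
        (∃ i, c i < d i) ∧
        r = ((∑ i : Fin 3, if c i < d i then (1 + if 0 < c i then (1:ℝ) else 0) else 0) +
              (if (∃ i, c i < d i ∧ c i = 0) ∧ (∃ i, ¬(c i < d i ∧ c i = 0))
                then (1:ℝ) else 0)) /
            ∑ i : Fin 3, (d i - c i)} =
      if a ≤ 4 * b then 3 / (a + 2 * b) else 2 / a := by
  obtain ⟨hC, hCa, hCb, hCsum⟩ := cheeger_bounds ha hb
  refine IsLeast.csInf_eq ⟨?_, ?_⟩
  · split_ifs
    · refine ⟨0, ![a, b, b], fun _ => le_rfl, ?_, le_rfl, le_rfl, le_rfl, ⟨0, ha⟩, ?_⟩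
      · simp [Fin.forall_fin_succ, ha.le, hb.le]
      · change _ = perimeter 0 ![a, b, b] / totalLength 0 ![a, b, b]
        rw [perimeter_zero_of_pos (by simp [Fin.forall_fin_succ, ha, hb]), totalLength_zero]
        simp [Fin.sum_univ_three, two_mul, add_assoc]
    · refine ⟨0, ![a, 0, 0], fun _ => le_rfl, ?_, le_rfl, hb.le, hb.le, ⟨0, ha⟩, ?_⟩
      · simp [Fin.forall_fin_succ, ha.le]
      · change _ = perimeter 0 ![a, 0, 0] / totalLength 0 ![a, 0, 0]
        rw [perimeter_single_edge ha, totalLength_zero]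
        simp [Fin.sum_univ_three]
  · rintro r ⟨c, d, hc, hcd, hd0, hd1, hd2, hne, rfl⟩
    refine (le_div_iff₀ (totalLength_pos hcd hne)).2
      (mul_totalLength_le_perimeter (ℓ := ![a, b, b]) hc hcd ?_ hC ?_ ?_)
    · intro i; fin_cases i <;> assumption
    · intro i; fin_cases i <;> assumption
    · simpa [Fin.sum_univ_three, two_mul, add_assoc] using hCsum
end

section
/- Let L > 0 and 1 < p < ∞, and define the p-Rayleigh quotient R_p(v) = (∫_0^L |v'|^p)^{1/p} / (∫_0^L |v|^p)^{1/p} for nonzero v ∈ C^1([0,L]) with v(0) = 0. Then for the infimum λ_p := inf_v R_p(v)^p one has limsup_{p→∞} λ_p^{1/p} ≤ inf_v ‖v'‖_∞/‖v‖_∞ over the same class of test functions. -/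
open MeasureTheory Filter Real Set Topology


lemma sup_abs_attained {K : Set ℝ} (hK : IsCompact K) (hne : K.Nonempty)
    {g : ℝ → ℝ} (hg : ContinuousOn g K) :
    ∃ z ∈ K, (⨆ x ∈ K, |g x|) = |g z| ∧ ∀ x ∈ K, |g x| ≤ |g z| := by
  obtain ⟨z, hz, hmax⟩ := hK.exists_isMaxOn hne hg.abs
  have hmax' : ∀ x ∈ K, |g x| ≤ |g z| := fun x hx => hmax hx
  have hub : ∀ x : ℝ, (⨆ _ : x ∈ K, |g x|) ≤ |g z| := by
    intro x
    by_cases h : x ∈ K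
    · rw [ciSup_pos h]; exact hmax' x h
    · rw [ciSup_neg h, Real.sSup_empty]; exact abs_nonneg _
  have hbdd : BddAbove (Set.range fun x : ℝ => ⨆ _ : x ∈ K, |g x|) := by
    refine ⟨|g z|, ?_⟩; rintro y ⟨x, rfl⟩; exact hub x
  refine ⟨z, hz, le_antisymm (ciSup_le hub) ?_, hmax'⟩
  have h1 : (⨆ _ : z ∈ K, |g z|) ≤ ⨆ x ∈ K, |g x| :=
    le_ciSup (f := fun x : ℝ => ⨆ _ : x ∈ K, |g x|) hbdd z
  rwa [ciSup_pos hz] at h1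

/-- the set of Rayleigh quotient values for exponent `p`. -/
def lamSet (L p : ℝ) : Set ℝ :=
  {R : ℝ | ∃ v : ℝ → ℝ, ContDiffOn ℝ 1 v (Set.Icc 0 L) ∧ v 0 = 0 ∧
      (∃ x ∈ Set.Icc 0 L, v x ≠ 0) ∧
      R = (∫ x in (0:ℝ)..L, |derivWithin v (Set.Icc 0 L) x| ^ p) /
          ∫ x in (0:ℝ)..L, |v x| ^ p}

lemma lamSet_nonneg (L p : ℝ) (hL : 0 ≤ L) : ∀ R ∈ lamSet L p, 0 ≤ R := by
  rintro R ⟨v, hv, hv0, hx, rfl⟩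
  apply div_nonneg <;>
    exact intervalIntegral.integral_nonneg hL fun x _ => Real.rpow_nonneg (abs_nonneg _) p

lemma key (L : ℝ) (hL : 0 < L) (v : ℝ → ℝ) (hv : ContDiffOn ℝ 1 v (Set.Icc 0 L))
    (hv0 : v 0 = 0) (x0 : ℝ) (hx0 : x0 ∈ Set.Icc 0 L) (hvx0 : v x0 ≠ 0) :
    Filter.limsup (fun p : ℝ => (sInf (lamSet L p)) ^ (1 / p)) Filter.atTop ≤
      (⨆ x ∈ Set.Icc 0 L, |derivWithin v (Set.Icc 0 L) x|) /
        (⨆ x ∈ Set.Icc 0 L, |v x|) := by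
  have hK : IsCompact (Icc (0:ℝ) L) := isCompact_Icc
  have hKne : (Icc (0:ℝ) L).Nonempty := nonempty_Icc.2 hL.le
  have hUD : UniqueDiffOn ℝ (Icc (0:ℝ) L) := uniqueDiffOn_Icc hL
  set f := derivWithin v (Icc (0:ℝ) L) with hfdef
  have hvc : ContinuousOn v (Icc (0:ℝ) L) := hv.continuousOn
  have hfc : ContinuousOn f (Icc (0:ℝ) L) := hv.continuousOn_derivWithin hUD le_rfl
  obtain ⟨z2, hz2, hAeq, hAmax⟩ := sup_abs_attained hK hKne hfc
  obtain ⟨z1, hz1, hBeq, hBmax⟩ := sup_abs_attained hK hKne hvc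
  rw [hAeq, hBeq]
  set A := |f z2| with hAdef
  set B := |v z1| with hBdef
  have hA0 : 0 ≤ A := abs_nonneg _
  have hB : 0 < B := lt_of_lt_of_le (abs_pos.2 hvx0) (hBmax x0 hx0)
  refine le_of_forall_pos_le_add fun η hη => ?_
  -- choose ε > 0 small
  set ε := min (B/2) (η*B^2/(A+η*B)) with hεdef
  have hεpos : 0 < ε := lt_min (by positivity) (by positivity)
  have hεB2 : ε ≤ B/2 := min_le_left _ _
  have hBε : 0 < B - ε := by linarith
  have hkey : A/(B-ε) ≤ A/B + η := by
    rw [div_le_iff₀ hBε]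
    have h2 : ε*(A+η*B) ≤ η*B^2 := by
      calc ε*(A+η*B) ≤ (η*B^2/(A+η*B))*(A+η*B) :=
            mul_le_mul_of_nonneg_right (min_le_right _ _) (by positivity)
        _ = η*B^2 := div_mul_cancel₀ _ (by positivity)
    have hq : A/B*B = A := div_mul_cancel₀ _ hB.ne'
    nlinarith [h2, hB, hεpos, hq, div_nonneg hA0 hB.le]
  -- find a subinterval where |v| ≥ B - ε
  have hcont : ContinuousWithinAt (fun x => |v x|) (Icc (0:ℝ) L) z1 := (hvc z1 hz1).abs
  have hpre : (fun x => |v x|) ⁻¹' Ioi (B - ε) ∈ 𝓝[Icc (0:ℝ) L] z1 :=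
    hcont (Ioi_mem_nhds (by linarith))
  rw [Metric.mem_nhdsWithin_iff] at hpre
  obtain ⟨θ, hθ, hball⟩ := hpre
  set a := max (z1 - θ/2) 0 with hadef
  set b := min (z1 + θ/2) L with hbdef2
  have hz10 : 0 ≤ z1 := hz1.1
  have hz1L : z1 ≤ L := hz1.2
  have ha0 : 0 ≤ a := le_max_right _ _
  have hbL : b ≤ L := min_le_right _ _
  have hab : a < b :=
    max_lt (lt_min (by linarith) (by linarith)) (lt_min (by linarith) hL)
  have hsub : Icc a b ⊆ Icc (0:ℝ) L := Icc_subset_Icc ha0 hbL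
  have hlow : ∀ x ∈ Icc a b, B - ε ≤ |v x| := by
    intro x hx
    have h1 : z1 - θ/2 ≤ a := le_max_left _ _
    have h2 : b ≤ z1 + θ/2 := min_le_left _ _
    have hxball : x ∈ Metric.ball z1 θ := by
      rw [Metric.mem_ball, Real.dist_eq, abs_sub_lt_iff]
      constructor <;> [linarith [hx.2]; linarith [hx.1]]
    exact le_of_lt (hball ⟨hxball, hsub hx⟩)
  set δ := b - a with hδdef
  have hδ : 0 < δ := sub_pos.2 hab
  set C := A / (B - ε) with hCdef
  have hC0 : 0 ≤ C := div_nonneg hA0 hBε.le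
  have hLδ : 0 < L/δ := div_pos hL hδ
  -- tendsto of the majorant
  have hGt : Tendsto (fun p : ℝ => C * (L/δ) ^ (1/p)) atTop (𝓝 C) := by
    have h1 : Tendsto (fun p : ℝ => (1/p) * Real.log (L/δ)) atTop (𝓝 0) := by
      simpa [one_div] using tendsto_inv_atTop_zero.mul_const (Real.log (L/δ))
    have h2 : Tendsto (fun p : ℝ => (L/δ) ^ (1/p)) atTop (𝓝 1) := by
      have hc := (Real.continuous_exp.tendsto 0).comp h1
      rw [Real.exp_zero] at hc
      refine hc.congr fun p => ?_
      simp only [Function.comp_apply]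
      rw [Real.rpow_def_of_pos hLδ, mul_comm]
    simpa using h2.const_mul C
  have hSnn : ∀ p : ℝ, 0 ≤ sInf (lamSet L p) :=
    fun p => Real.sInf_nonneg (lamSet_nonneg L p hL.le)
  -- the eventual bound
  have hevle : ∀ᶠ p : ℝ in atTop,
      (sInf (lamSet L p)) ^ (1/p) ≤ C * (L/δ) ^ (1/p) := by
    filter_upwards [eventually_ge_atTop (1:ℝ)] with p hp
    have hp0 : 0 < p := lt_of_lt_of_le one_pos hp
    have hcont1 : ContinuousOn (fun x => |f x| ^ p) (Icc (0:ℝ) L) :=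
      hfc.abs.rpow_const fun x _ => Or.inr hp0.le
    have hcont2 : ContinuousOn (fun x => |v x| ^ p) (Icc (0:ℝ) L) :=
      hvc.abs.rpow_const fun x _ => Or.inr hp0.le
    have hint1 : IntervalIntegrable (fun x => |f x| ^ p) volume 0 L :=
      (hcont1.mono (uIcc_of_le hL.le).subset).intervalIntegrable
    have hint2 : IntervalIntegrable (fun x => |v x| ^ p) volume 0 L :=
      (hcont2.mono (uIcc_of_le hL.le).subset).intervalIntegrable
    have hint2ab : IntervalIntegrable (fun x => |v x| ^ p) volume a b :=
      (hcont2.mono (((uIcc_of_le hab.le).trans_subset hsub))).intervalIntegrable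
    have hI1 : (∫ x in (0:ℝ)..L, |f x| ^ p) ≤ L * A ^ p := by
      calc (∫ x in (0:ℝ)..L, |f x| ^ p) ≤ ∫ _x in (0:ℝ)..L, A ^ p :=
            intervalIntegral.integral_mono_on hL.le hint1 intervalIntegrable_const
              fun x hx => Real.rpow_le_rpow (abs_nonneg _) (hAmax x hx) hp0.le
        _ = L * A ^ p := by simp
    have hI2 : (B - ε) ^ p * δ ≤ ∫ x in (0:ℝ)..L, |v x| ^ p := by
      have step1 : (B - ε) ^ p * δ ≤ ∫ x in a..b, |v x| ^ p := by
        have : (∫ _x in a..b, (B - ε) ^ p) ≤ ∫ x in a..b, |v x| ^ p :=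
          intervalIntegral.integral_mono_on hab.le intervalIntegrable_const hint2ab
            fun x hx => Real.rpow_le_rpow hBε.le (hlow x hx) hp0.le
        simpa [mul_comm] using this
      have step2 : (∫ x in a..b, |v x| ^ p) ≤ ∫ x in (0:ℝ)..L, |v x| ^ p := by
        rw [intervalIntegral.integral_of_le hab.le, intervalIntegral.integral_of_le hL.le]
        apply setIntegral_mono_set
          ((intervalIntegrable_iff_integrableOn_Ioc_of_le hL.le).1 hint2)
          (ae_of_all _ fun x => Real.rpow_nonneg (abs_nonneg _) p)
          ((Ioc_subset_Ioc ha0 hbL).eventuallyLE)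
      linarith
    have hI2pos : 0 < ∫ x in (0:ℝ)..L, |v x| ^ p :=
      lt_of_lt_of_le (by positivity) hI2
    have hmem : ((∫ x in (0:ℝ)..L, |f x| ^ p) / ∫ x in (0:ℝ)..L, |v x| ^ p) ∈ lamSet L p :=
      ⟨v, hv, hv0, ⟨x0, hx0, hvx0⟩, rfl⟩
    have h1 : sInf (lamSet L p) ≤
        (∫ x in (0:ℝ)..L, |f x| ^ p) / ∫ x in (0:ℝ)..L, |v x| ^ p :=
      csInf_le ⟨0, fun R hR => lamSet_nonneg L p hL.le R hR⟩ hmem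
    have h2 : ((∫ x in (0:ℝ)..L, |f x| ^ p) / ∫ x in (0:ℝ)..L, |v x| ^ p) ≤
        (L * A ^ p) / ((B - ε) ^ p * δ) :=
      div_le_div₀ (by positivity) hI1 (by positivity) hI2
    have h3 : (sInf (lamSet L p)) ^ (1/p) ≤ ((L * A ^ p) / ((B - ε) ^ p * δ)) ^ (1/p) :=
      Real.rpow_le_rpow (hSnn p) (h1.trans h2) (by positivity)
    have h4 : ((L * A ^ p) / ((B - ε) ^ p * δ)) ^ (1/p) = C * (L/δ) ^ (1/p) := by
      rw [Real.div_rpow (by positivity) (by positivity),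
        Real.mul_rpow hL.le (by positivity),
        Real.mul_rpow (by positivity) hδ.le,
        ← Real.rpow_mul hA0, ← Real.rpow_mul hBε.le,
        mul_one_div, div_self hp0.ne', Real.rpow_one, Real.rpow_one,
        Real.div_rpow hL.le hδ.le, hCdef]
      field_simp
    exact h3.trans_eq h4
  have hcob : IsCoboundedUnder (· ≤ ·) atTop (fun p : ℝ => (sInf (lamSet L p)) ^ (1/p)) :=
    isCoboundedUnder_le_of_le atTop fun p => Real.rpow_nonneg (hSnn p) _
  calc Filter.limsup (fun p : ℝ => (sInf (lamSet L p)) ^ (1/p)) atTop ≤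
        Filter.limsup (fun p : ℝ => C * (L/δ) ^ (1/p)) atTop :=
        limsup_le_limsup hevle hcob hGt.isBoundedUnder_le
    _ = C := hGt.limsup_eq
    _ ≤ A/B + η := hkey


/-- Upper-bound half of the convergence `λ_{1,p}^{1/p} → Λ_∞` as `p → ∞` on a single
edge with Dirichlet condition at `0`. -/
theorem stmt19 (L : ℝ) (hL : 0 < L) :
    Filter.limsup
      (fun p : ℝ =>
        (sInf {R : ℝ | ∃ v : ℝ → ℝ, ContDiffOn ℝ 1 v (Set.Icc 0 L) ∧ v 0 = 0 ∧
            (∃ x ∈ Set.Icc 0 L, v x ≠ 0) ∧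
            R = (∫ x in (0:ℝ)..L, |derivWithin v (Set.Icc 0 L) x| ^ p) /
                ∫ x in (0:ℝ)..L, |v x| ^ p}) ^ (1 / p))
      Filter.atTop ≤
    sInf {r : ℝ | ∃ v : ℝ → ℝ, ContDiffOn ℝ 1 v (Set.Icc 0 L) ∧ v 0 = 0 ∧
        (∃ x ∈ Set.Icc 0 L, v x ≠ 0) ∧
        r = (⨆ x ∈ Set.Icc 0 L, |derivWithin v (Set.Icc 0 L) x|) /
            (⨆ x ∈ Set.Icc 0 L, |v x|)} := by
  refine le_csInf ⟨_, id, contDiffOn_id, rfl, ⟨L, ⟨hL.le, le_refl L⟩, hL.ne'⟩, rfl⟩ ?_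
  rintro r ⟨v, hv, hv0, ⟨x0, hx0, hvx0⟩, rfl⟩
  exact key L hL v hv hv0 x0 hx0 hvx0
end
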